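/- arXiv:1907.02119 — 3 statements merged into one kernel-verified Lean document; each statement's English description precedes it below -/
import Mathlib

section
/- Let M be a regular right R-module and suppose m1 ≤⁻ m2 and m2 ≤⁻ m3 for m1, m2, m3 ∈ M. Then m1 ≤⁻ m3. -/
/- A right `R`-module is encoded as a left `Rᵐᵒᵖ`-module: `m · r = MulOpposite.op r • m`.
Likewise `R` itself is a right `R`-module via `op r • a = a * r`, so the dual
`M* = Hom_R(M, R)` is `M →ₗ[Rᵐᵒᵖ] R` and `S = End_R(M)` is `Module.End Rᵐᵒᵖ M`. -/

open MulOpposite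

/-- The minus relation `m₁ ≤⁻ m₂` on a right `R`-module `M`: there exists `φ ∈ M*`
with `m₁ = m₁·φ(m₁)`, `m₁·φ(x) = m₂·φ(x)` for all `x ∈ M`, and `φ(m₁) = φ(m₂)`. -/
def MinusLE (R : Type*) [Ring R] {M : Type*} [AddCommGroup M] [Module Rᵐᵒᵖ M]
    (m₁ m₂ : M) : Prop :=
  ∃ φ : M →ₗ[Rᵐᵒᵖ] R,
    m₁ = op (φ m₁) • m₁ ∧ (∀ x : M, op (φ x) • m₁ = op (φ x) • m₂) ∧ φ m₁ = φ m₂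

/-- An element `m` of a right `R`-module is (Zelmanowitz) regular if `m = m·φ(m)`
for some `φ ∈ M*`. -/
def IsRegularElem (R : Type*) [Ring R] {M : Type*} [AddCommGroup M] [Module Rᵐᵒᵖ M]
    (m : M) : Prop :=
  ∃ φ : M →ₗ[Rᵐᵒᵖ] R, m = op (φ m) • m

section MinusOrder

variable {R : Type*} [Ring R] {M : Type*} [AddCommGroup M] [Module Rᵐᵒᵖ M]

theorem LinearMap.apply_op_smul (φ : M →ₗ[Rᵐᵒᵖ] R) (r : R) (m : M) :
    φ (op r • m) = φ m * r := by
  rw [map_smul, op_smul_eq_mul]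

structure IsMinusWitness (φ : M →ₗ[Rᵐᵒᵖ] R) (m₁ m₂ : M) : Prop where
  eq_op_smul_self : m₁ = op (φ m₁) • m₁
  op_smul_eq : ∀ x : M, op (φ x) • m₁ = op (φ x) • m₂
  apply_eq : φ m₁ = φ m₂

theorem minusLE_iff_exists_isMinusWitness {m₁ m₂ : M} :
    MinusLE R m₁ m₂ ↔ ∃ φ : M →ₗ[Rᵐᵒᵖ] R, IsMinusWitness φ m₁ m₂ :=
  ⟨fun ⟨φ, h₁, h₂, h₃⟩ => ⟨φ, h₁, h₂, h₃⟩, fun ⟨φ, h⟩ => ⟨φ, h.1, h.2, h.3⟩⟩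

namespace IsMinusWitness

variable {φ ψ : M →ₗ[Rᵐᵒᵖ] R} {m₁ m₂ m₃ : M}

theorem eq_op_smul_right (h : IsMinusWitness φ m₁ m₂) : m₁ = op (φ m₁) • m₂ :=
  h.eq_op_smul_self.trans (h.op_smul_eq m₁)

theorem op_smul_eq_self_of_op_smul_eq_self (h : IsMinusWitness φ m₁ m₂) {r : R}
    (hr : op r • m₂ = m₂) : op r • m₁ = m₁ := by
  have hφ : φ m₂ * r = φ m₂ := by rw [← LinearMap.apply_op_smul, hr]
  have hm : m₁ = op (φ m₂) • m₂ := h.apply_eq ▸ h.eq_op_smul_right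
  calc op r • m₁ = op (φ m₂ * r) • m₂ := by rw [op_mul, mul_smul, ← hm]
    _ = m₁ := by rw [hφ, ← hm]

/-- With `u = ψ(m₁)` one has `m₁·u = m₁ = m₃·u` and `u² = u`, which makes `x ↦ u ψ(x)` a witness. -/
theorem trans (hφ : IsMinusWitness φ m₁ m₂) (hψ : IsMinusWitness ψ m₂ m₃) :
    IsMinusWitness (ψ m₁ • ψ) m₁ m₃ := by
  set u := ψ m₁
  have hψ₂ : op (ψ m₂) • m₁ = m₁ :=
    hφ.op_smul_eq_self_of_op_smul_eq_self hψ.eq_op_smul_self.symm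
  have hu : u = ψ m₂ * φ m₁ := by
    rw [← LinearMap.apply_op_smul, ← hφ.eq_op_smul_right]
  have hu₁ : op u • m₁ = m₁ := by
    rw [hu, op_mul, mul_smul, hψ₂, ← hφ.eq_op_smul_self]
  have hu₃ : op u • m₃ = m₁ := by
    rw [hu, op_mul, mul_smul, ← hψ.op_smul_eq, ← hψ.eq_op_smul_self, ← hφ.eq_op_smul_right]
  have hidem : u * u = u := by rw [← LinearMap.apply_op_smul, hu₁]
  have hu₂ : u * ψ m₂ = u := by rw [← LinearMap.apply_op_smul, hψ₂]
  refine ⟨?_, fun x => ?_, ?_⟩ <;> simp only [LinearMap.smul_apply, smul_eq_mul]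
  · rw [hidem, hu₁]
  · rw [op_mul, mul_smul, mul_smul, hu₁, hu₃]
  · rw [hidem, ← hψ.apply_eq, hu₂]

end IsMinusWitness

end MinusOrder

theorem minusLE_trans_general (R : Type*) [Ring R] {M : Type*} [AddCommGroup M]
    [Module Rᵐᵒᵖ M] (m₁ m₂ m₃ : M)
    (h₁ : MinusLE R m₁ m₂) (h₂ : MinusLE R m₂ m₃) : MinusLE R m₁ m₃ := by
  obtain ⟨φ, hφ⟩ := minusLE_iff_exists_isMinusWitness.mp h₁
  obtain ⟨ψ, hψ⟩ := minusLE_iff_exists_isMinusWitness.mp h₂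
  exact minusLE_iff_exists_isMinusWitness.mpr ⟨_, hφ.trans hψ⟩

/-- On a regular module, the minus relation is transitive. -/
theorem minusLE_trans (R : Type*) [Ring R] {M : Type*} [AddCommGroup M]
    [Module Rᵐᵒᵖ M] (hM : ∀ m : M, IsRegularElem R m) (m₁ m₂ m₃ : M)
    (h₁ : MinusLE R m₁ m₂) (h₂ : MinusLE R m₂ m₃) : MinusLE R m₁ m₃ :=
  minusLE_trans_general R m₁ m₂ m₃ h₁ h₂
end

section
/- Let M be a regular right R-module such that S = End_R(M) is a Rickart *-ring. Then the left-star relation *≤ (defined by: m1 *≤ m2 if there exist a self-adjoint idempotent f ∈ S and an idempotent a ∈ R such that l_S(m1) = l_S(f), r_R(m1) = r_R(a), f(m1) = f(m2), and m1·a = m2·a) is a partial order on M. -/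
/- A right `R`-module is encoded as a left `Rᵐᵒᵖ`-module: `m · r = MulOpposite.op r • m`.
Likewise `R` itself is a right `R`-module via `op r • a = a * r`, so the dual
`M* = Hom_R(M, R)` is `M →ₗ[Rᵐᵒᵖ] R` and `S = End_R(M)` is `Module.End Rᵐᵒᵖ M`. -/

open MulOpposite

/-- The left-star relation `m₁ ∗≤ m₂` on a right `R`-module whose endomorphism ring
`S = End_R(M)` carries an involution: there exist a self-adjoint idempotent `f ∈ S`
and an idempotent `a ∈ R` with `l_S(m₁) = l_S(f)`, `r_R(m₁) = r_R(a)`,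
`f(m₁) = f(m₂)`, and `m₁·a = m₂·a`. -/
def LeftStarLE (R : Type*) [Ring R] {M : Type*} [AddCommGroup M] [Module Rᵐᵒᵖ M]
    [StarRing (Module.End Rᵐᵒᵖ M)] (m₁ m₂ : M) : Prop :=
  ∃ (f : Module.End Rᵐᵒᵖ M) (a : R), f * f = f ∧ star f = f ∧ a * a = a ∧
    {g : Module.End Rᵐᵒᵖ M | g m₁ = 0} = {g : Module.End Rᵐᵒᵖ M | g * f = 0} ∧
    {r : R | op r • m₁ = (0 : M)} = {x : R | a * x = 0} ∧
    f m₁ = f m₂ ∧ op a • m₁ = op a • m₂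

/-!
In a `*`-ring a projection `p` is determined by its left annihilator: if `g * q = 0 → g * p = 0`
then `(1 - q) * p = 0`, so `p = q * p`, and taking adjoints `p = p * q`. If `m₁ *≤ m₂` via
`(f, a)`, then `f m₁ = m₁` and `m₁ · a = m₁`, so `m₁ = f m₂ = m₂ · a`; hence
`l_S(m₂) ⊆ l_S(m₁)` and `r_R(m₂) ⊆ r_R(m₁)`. Antisymmetry follows because the projections of
`m₁` and `m₂` then have the same left annihilator, and transitivity with the witness
`(f₁, a₂ a₁)`. Reflexivity is where the hypotheses enter: if `m = m · φ(m)`, then `φ(m)` is an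
idempotent with `r_R(m) = r_R(φ(m))`, and `m` has the same left annihilator as the
endomorphism `e = m · φ(-)`, which by the Rickart property is `S q = l_S(1 - q)` for a
projection `q`.
-/

section Ring

variable {S : Type*} [Ring S] {p q : S}

theorem IsIdempotentElem.mul_eq_right_of_lann_subset (hq : IsIdempotentElem q)
    (h : {g : S | g * q = 0} ⊆ {g : S | g * p = 0}) : q * p = p := by
  have hqp : (1 - q) * p = 0 := h hq.one_sub_mul_self
  rw [sub_mul, one_mul, sub_eq_zero] at hqp
  exact hqp.symm

theorem IsIdempotentElem.mul_eq_left_of_rann_subset (hq : IsIdempotentElem q)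
    (h : {x : S | q * x = 0} ⊆ {x : S | p * x = 0}) : p * q = p := by
  have hpq : p * (1 - q) = 0 := h hq.mul_one_sub_self
  rw [mul_sub, mul_one, sub_eq_zero] at hpq
  exact hpq.symm

theorem IsIdempotentElem.mul_one_sub_eq_zero_iff (hq : IsIdempotentElem q) (g : S) :
    g * (1 - q) = 0 ↔ ∃ y, g = y * q := by
  constructor
  · intro hg
    rw [mul_sub, mul_one, sub_eq_zero] at hg
    exact ⟨g, hg⟩
  · rintro ⟨y, rfl⟩
    rw [mul_assoc, hq.mul_one_sub_self, mul_zero]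

end Ring

section StarRing

variable {S : Type*} [Ring S] [StarRing S]

theorem IsSelfAdjoint.mul_eq_right_iff_mul_eq_left {p q : S} (hp : IsSelfAdjoint p)
    (hq : IsSelfAdjoint q) : q * p = p ↔ p * q = p := by
  rw [← star_inj, star_mul, hp.star_eq, hq.star_eq]

theorem IsStarProjection.mul_eq_left_of_lann_subset {p q : S} (hp : IsSelfAdjoint p)
    (hq : IsStarProjection q) (h : {g : S | g * q = 0} ⊆ {g : S | g * p = 0}) : p * q = p :=
  (hp.mul_eq_right_iff_mul_eq_left hq.isSelfAdjoint).mp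
    (hq.isIdempotentElem.mul_eq_right_of_lann_subset h)

theorem IsStarProjection.eq_of_lann_eq {p q : S} (hp : IsStarProjection p)
    (hq : IsStarProjection q) (h : {g : S | g * p = 0} = {g : S | g * q = 0}) : p = q := by
  have hpq : p * q = p := hq.mul_eq_left_of_lann_subset hp.isSelfAdjoint h.ge
  have hqp : p * q = q := (hq.isSelfAdjoint.mul_eq_right_iff_mul_eq_left hp.isSelfAdjoint).mpr
    (hp.mul_eq_left_of_lann_subset hq.isSelfAdjoint h.le)
  rw [← hpq, hqp]

end StarRing

section Module

variable {R : Type*} [Ring R] {M : Type*} [AddCommGroup M] [Module Rᵐᵒᵖ M]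

theorem apply_eq_self_of_lann_eq {f : Module.End Rᵐᵒᵖ M} {m : M} (hf : IsIdempotentElem f)
    (h : {g : Module.End Rᵐᵒᵖ M | g m = 0} = {g : Module.End Rᵐᵒᵖ M | g * f = 0}) :
    f m = m := by
  have hm : (1 - f) m = 0 := by
    change 1 - f ∈ {g : Module.End Rᵐᵒᵖ M | g m = 0}
    rw [h]
    exact hf.one_sub_mul_self
  rw [LinearMap.sub_apply, Module.End.one_apply, sub_eq_zero] at hm
  exact hm.symm

theorem op_smul_eq_self_of_rann_eq {a : R} {m : M} (ha : IsIdempotentElem a)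
    (h : {r : R | op r • m = (0 : M)} = {x : R | a * x = 0}) : op a • m = m := by
  have hm : op (1 - a) • m = 0 := by
    change 1 - a ∈ {r : R | op r • m = (0 : M)}
    rw [h]
    exact ha.mul_one_sub_self
  rw [op_sub, op_one, sub_smul, one_smul, sub_eq_zero] at hm
  exact hm.symm

theorem lann_subset_of_eq_op_smul {m₁ m₂ : M} {a : R} (h : m₁ = op a • m₂) :
    {g : Module.End Rᵐᵒᵖ M | g m₂ = 0} ⊆ {g : Module.End Rᵐᵒᵖ M | g m₁ = 0} :=
  fun g (hg : g m₂ = 0) ↦ show g m₁ = 0 by rw [h, map_smul, hg, smul_zero]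

theorem rann_subset_of_eq_apply {m₁ m₂ : M} {f : Module.End Rᵐᵒᵖ M} (h : m₁ = f m₂) :
    {r : R | op r • m₂ = (0 : M)} ⊆ {r : R | op r • m₁ = (0 : M)} :=
  fun r (hr : op r • m₂ = 0) ↦ show op r • m₁ = 0 by rw [h, ← map_smul, hr, map_zero]

def rankOneEnd (φ : M →ₗ[Rᵐᵒᵖ] R) (m : M) : Module.End Rᵐᵒᵖ M :=
  LinearMap.smulRight ((opLinearEquiv Rᵐᵒᵖ).toLinearMap ∘ₗ φ) m

@[simp]
theorem rankOneEnd_apply (φ : M →ₗ[Rᵐᵒᵖ] R) (m x : M) : rankOneEnd φ m x = op (φ x) • m :=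
  rfl

section Regular

variable {φ : M →ₗ[Rᵐᵒᵖ] R} {m : M}

theorem isIdempotentElem_of_eq_op_smul (hφ : m = op (φ m) • m) : IsIdempotentElem (φ m) := by
  have h := congrArg φ hφ
  rw [map_smul, op_smul_eq_mul] at h
  exact h.symm

theorem lann_eq_lann_rankOneEnd (hφ : m = op (φ m) • m) :
    {g : Module.End Rᵐᵒᵖ M | g m = 0} = {g : Module.End Rᵐᵒᵖ M | g * rankOneEnd φ m = 0} := by
  ext g
  constructor
  · intro (hg : g m = 0)
    ext x
    simp [hg]
  · intro hg
    rw [hφ]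
    simpa using LinearMap.congr_fun hg m

theorem rann_eq_rann_of_eq_op_smul (hφ : m = op (φ m) • m) :
    {r : R | op r • m = (0 : M)} = {x : R | φ m * x = 0} := by
  ext r
  constructor
  · intro h
    simpa using congrArg φ h
  · intro h
    change φ m * r = 0 at h
    change op r • m = 0
    rw [hφ, ← mul_smul, ← op_mul, h, op_zero, zero_smul]

end Regular

end Module

section LeftStar

variable {R : Type*} [Ring R] {M : Type*} [AddCommGroup M] [Module Rᵐᵒᵖ M]
  [StarRing (Module.End Rᵐᵒᵖ M)]

theorem leftStarLE_refl {m : M} (hm : IsRegularElem R m)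
    (hRickart : ∀ s : Module.End Rᵐᵒᵖ M, ∃ q : Module.End Rᵐᵒᵖ M, q * q = q ∧ star q = q ∧
      {x : Module.End Rᵐᵒᵖ M | x * s = 0} = {x : Module.End Rᵐᵒᵖ M | ∃ y, x = y * q}) :
    LeftStarLE R m m := by
  obtain ⟨φ, hφ⟩ := hm
  obtain ⟨q, hq, hqs, hlann⟩ := hRickart (rankOneEnd φ m)
  have hf : IsStarProjection (1 - q) := IsStarProjection.one_sub ⟨hq, hqs⟩
  refine ⟨1 - q, φ m, hf.isIdempotentElem, hf.isSelfAdjoint, isIdempotentElem_of_eq_op_smul hφ,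
    ?_, rann_eq_rann_of_eq_op_smul hφ, rfl, rfl⟩
  rw [lann_eq_lann_rankOneEnd hφ, hlann]
  ext g
  exact (IsIdempotentElem.mul_one_sub_eq_zero_iff hq g).symm

theorem LeftStarLE.antisymm {m₁ m₂ : M} (h₁₂ : LeftStarLE R m₁ m₂) (h₂₁ : LeftStarLE R m₂ m₁) :
    m₁ = m₂ := by
  obtain ⟨f₁, a₁, hf₁, hf₁s, ha₁, hlf₁, hra₁, hfm, ham⟩ := h₁₂
  obtain ⟨f₂, a₂, hf₂, hf₂s, ha₂, hlf₂, hra₂, -, ham'⟩ := h₂₁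
  have h₁ : m₁ = op a₁ • m₂ := by rw [← ham, op_smul_eq_self_of_rann_eq ha₁ hra₁]
  have h₂ : m₂ = op a₂ • m₁ := by rw [← ham', op_smul_eq_self_of_rann_eq ha₂ hra₂]
  have hlann : {g : Module.End Rᵐᵒᵖ M | g m₁ = 0} = {g | g m₂ = 0} :=
    (lann_subset_of_eq_op_smul h₂).antisymm (lann_subset_of_eq_op_smul h₁)
  have hf : f₁ = f₂ :=
    IsStarProjection.eq_of_lann_eq ⟨hf₁, hf₁s⟩ ⟨hf₂, hf₂s⟩ (by rw [← hlf₁, ← hlf₂, hlann])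
  calc m₁ = f₁ m₁ := (apply_eq_self_of_lann_eq hf₁ hlf₁).symm
    _ = f₁ m₂ := hfm
    _ = m₂ := hf ▸ apply_eq_self_of_lann_eq hf₂ hlf₂

theorem LeftStarLE.trans {m₁ m₂ m₃ : M} (h₁₂ : LeftStarLE R m₁ m₂) (h₂₃ : LeftStarLE R m₂ m₃) :
    LeftStarLE R m₁ m₃ := by
  obtain ⟨f₁, a₁, hf₁, hf₁s, ha₁, hlf₁, hra₁, hfm₁, ham₁⟩ := h₁₂
  obtain ⟨f₂, a₂, hf₂, hf₂s, ha₂, hlf₂, hra₂, hfm₂, ham₂⟩ := h₂₃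
  have h₁₂a : m₁ = op a₁ • m₂ := by rw [← ham₁, op_smul_eq_self_of_rann_eq ha₁ hra₁]
  have h₁₂f : m₁ = f₁ m₂ := by rw [← hfm₁, apply_eq_self_of_lann_eq hf₁ hlf₁]
  have h₂₃a : m₂ = op a₂ • m₃ := by rw [← ham₂, op_smul_eq_self_of_rann_eq ha₂ hra₂]
  have h₂₃f : m₂ = f₂ m₃ := by rw [← hfm₂, apply_eq_self_of_lann_eq hf₂ hlf₂]
  have hf : f₁ * f₂ = f₁ := IsStarProjection.mul_eq_left_of_lann_subset hf₁s ⟨hf₂, hf₂s⟩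
    (by rw [← hlf₁, ← hlf₂]; exact lann_subset_of_eq_op_smul h₁₂a)
  have ha : a₁ * a₂ = a₁ := IsIdempotentElem.mul_eq_left_of_rann_subset ha₂
    (by rw [← hra₁, ← hra₂]; exact rann_subset_of_eq_apply h₁₂f)
  have hb : IsIdempotentElem (a₂ * a₁) := by
    rw [IsIdempotentElem, mul_assoc, ← mul_assoc a₁, ha, ha₁]
  have hb₃ : op (a₂ * a₁) • m₃ = m₁ := by rw [op_mul, mul_smul, ← h₂₃a, ← h₁₂a]
  refine ⟨f₁, a₂ * a₁, hf₁, hf₁s, hb, hlf₁, ?_, ?_, ?_⟩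
  · ext x
    constructor
    · intro (hx : op x • m₁ = 0)
      have hax : a₁ * x = 0 := (hra₁ ▸ hx : x ∈ {x : R | a₁ * x = 0})
      change a₂ * a₁ * x = 0
      rw [mul_assoc, hax, mul_zero]
    · intro (hx : a₂ * a₁ * x = 0)
      change op x • m₁ = 0
      rw [← hb₃, ← mul_smul, ← op_mul, hx, op_zero, zero_smul]
  · calc f₁ m₁ = f₁ (f₂ m₃) := by rw [hfm₁, ← h₂₃f]
      _ = f₁ m₃ := by rw [← Module.End.mul_apply, hf]
  · calc op (a₂ * a₁) • m₁ = op (a₂ * a₁ * (a₂ * a₁)) • m₃ := by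
          rw [op_mul (a₂ * a₁), mul_smul, hb₃]
      _ = op (a₂ * a₁) • m₃ := by rw [hb.eq]

end LeftStar

/-- If `M` is a regular right `R`-module such that `S = End_R(M)` is a
Rickart `*`-ring, then the left-star relation is a partial order on `M`. -/
theorem leftStarLE_isPartialOrder (R : Type*) [Ring R] {M : Type*}
    [AddCommGroup M] [Module Rᵐᵒᵖ M] [StarRing (Module.End Rᵐᵒᵖ M)]
    (hM : ∀ m : M, IsRegularElem R m)
    (hRickart : ∀ s : Module.End Rᵐᵒᵖ M,
      (∃ p : Module.End Rᵐᵒᵖ M, p * p = p ∧ star p = p ∧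
        {x : Module.End Rᵐᵒᵖ M | s * x = 0} = {x : Module.End Rᵐᵒᵖ M | ∃ y, x = p * y}) ∧
      (∃ q : Module.End Rᵐᵒᵖ M, q * q = q ∧ star q = q ∧
        {x : Module.End Rᵐᵒᵖ M | x * s = 0} = {x : Module.End Rᵐᵒᵖ M | ∃ y, x = y * q})) :
    (∀ m : M, LeftStarLE R m m) ∧
    (∀ m₁ m₂ : M, LeftStarLE R m₁ m₂ → LeftStarLE R m₂ m₁ → m₁ = m₂) ∧
    (∀ m₁ m₂ m₃ : M, LeftStarLE R m₁ m₂ → LeftStarLE R m₂ m₃ → LeftStarLE R m₁ m₃) :=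
  ⟨fun m ↦ leftStarLE_refl (hM m) fun s ↦ (hRickart s).2,
    fun _ _ ↦ LeftStarLE.antisymm, fun _ _ _ ↦ LeftStarLE.trans⟩
end

section
/- Let M be a regular right R-module and m1, m2 ∈ M. Then m1 ≤⁻ m2 if and only if there exist an idempotent f ∈ S and an idempotent a ∈ R such that m1R ⊆ f(M), S·m1 ⊆ M·a, f(m1) = f(m2), and m1·a = m2·a. -/
/- A right `R`-module is encoded as a left `Rᵐᵒᵖ`-module: `m · r = MulOpposite.op r • m`.
Likewise `R` itself is a right `R`-module via `op r • a = a * r`, so the dual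
`M* = Hom_R(M, R)` is `M →ₗ[Rᵐᵒᵖ] R` and `S = End_R(M)` is `Module.End Rᵐᵒᵖ M`. -/

open MulOpposite

/-!
A witness `φ` of `m₁ ≤⁻ m₂` yields the idempotents `f = m₁ ⊗ φ : x ↦ m₁·φ(x)` and
`a = φ(m₁)`. Conversely, both idempotents fix `m₁`, so if `ψ` witnesses the regularity of `m₁`
then `x ↦ a·ψ(f(x))` witnesses `m₁ ≤⁻ m₂`.
-/

open scoped RightActions

section RightModule

variable {R : Type*} [Ring R] {M N : Type*} [AddCommGroup M] [Module Rᵐᵒᵖ M]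
  [AddCommGroup N] [Module Rᵐᵒᵖ N]

lemma LinearMap.map_op_smul (φ : M →ₗ[Rᵐᵒᵖ] R) (x : M) (r : R) : φ (x <• r) = φ x * r := by
  rw [map_smul, op_smul_eq_mul]

lemma LinearMap.map_op_smul_eq_self (g : M →ₗ[Rᵐᵒᵖ] N) {m : M} {a : R} (hm : m <• a = m) :
    g m <• a = g m := by
  rw [← map_smul, hm]

lemma op_smul_eq_self_of_eq_op_smul {a : R} (ha : IsIdempotentElem a) {m y : M}
    (hm : m = y <• a) : m <• a = m := by
  rw [hm, op_smul_op_smul, ha.eq]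

def opSmulRight (φ : M →ₗ[Rᵐᵒᵖ] R) (n : N) : M →ₗ[Rᵐᵒᵖ] N where
  toFun x := n <• φ x
  map_add' x y := by simp only [map_add, op_add, add_smul]
  map_smul' r x := by
    induction r using MulOpposite.rec' with
    | _ r => simp only [LinearMap.map_op_smul, op_smul_mul, RingHom.id_apply]

@[simp]
lemma opSmulRight_apply (φ : M →ₗ[Rᵐᵒᵖ] R) (n : N) (x : M) : opSmulRight φ n x = n <• φ x :=
  rfl

section Regular

variable {φ : M →ₗ[Rᵐᵒᵖ] R} {m : M}

lemma opSmulRight_apply_op_smul_self (hm : m <• φ m = m) (r : R) :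
    opSmulRight φ m (m <• r) = m <• r := by
  rw [opSmulRight_apply, LinearMap.map_op_smul, ← op_smul_op_smul, hm]

lemma isIdempotentElem_opSmulRight (hm : m <• φ m = m) : IsIdempotentElem (opSmulRight φ m) :=
  LinearMap.ext fun x => opSmulRight_apply_op_smul_self hm (φ x)

lemma isIdempotentElem_apply_self (hm : m <• φ m = m) : IsIdempotentElem (φ m) := by
  rw [IsIdempotentElem, ← LinearMap.map_op_smul, hm]

end Regular

lemma minusLE_of_apply_eq_of_op_smul_eq {φ : M →ₗ[Rᵐᵒᵖ] R} {m₁ m₂ : M} (hφ : m₁ <• φ m₁ = m₁)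
    {a : R} (ha : m₁ <• a = m₁) (ha₁₂ : m₁ <• a = m₂ <• a) {f : Module.End Rᵐᵒᵖ M}
    (hf : f m₁ = m₁) (hf₁₂ : f m₁ = f m₂) : MinusLE R m₁ m₂ := by
  refine ⟨opSmulRight φ a ∘ₗ f, ?_, fun x => ?_, ?_⟩ <;>
    simp only [LinearMap.comp_apply, opSmulRight_apply, op_smul_eq_mul, op_smul_mul]
  · rw [hf, ha, hφ]
  · rw [ha₁₂]
  · rw [hf₁₂]

end RightModule

/-- On a regular module, `m₁ ≤⁻ m₂` iff there are idempotents `f ∈ S`,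
`a ∈ R` with `m₁R ⊆ f(M)`, `S·m₁ ⊆ M·a`, `f(m₁) = f(m₂)`, and `m₁·a = m₂·a`. -/
theorem minusLE_iff_exists_idempotents_images (R : Type*) [Ring R] {M : Type*}
    [AddCommGroup M] [Module Rᵐᵒᵖ M] (hM : ∀ m : M, IsRegularElem R m) (m₁ m₂ : M) :
    MinusLE R m₁ m₂ ↔
      ∃ (f : Module.End Rᵐᵒᵖ M) (a : R), f * f = f ∧ a * a = a ∧
        {x : M | ∃ r : R, x = op r • m₁} ⊆ Set.range f ∧
        {x : M | ∃ g : Module.End Rᵐᵒᵖ M, x = g m₁} ⊆ {x : M | ∃ y : M, x = op a • y} ∧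
        f m₁ = f m₂ ∧ op a • m₁ = op a • m₂ := by
  constructor
  · rintro ⟨φ, hφ, hsmul, hφ₁₂⟩
    replace hφ := hφ.symm
    exact ⟨opSmulRight φ m₁, φ m₁, isIdempotentElem_opSmulRight hφ,
      isIdempotentElem_apply_self hφ,
      fun x ⟨r, hx⟩ => ⟨x, hx ▸ opSmulRight_apply_op_smul_self hφ r⟩,
      fun x ⟨g, hx⟩ => ⟨x, hx ▸ (g.map_op_smul_eq_self hφ).symm⟩,
      by simp only [opSmulRight_apply, hφ₁₂], hsmul m₁⟩
  · rintro ⟨f, a, hf, ha, hm₁f, hm₁a, hf₁₂, ha₁₂⟩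
    obtain ⟨ψ, hψ⟩ := hM m₁
    have hfm₁ : f m₁ = m₁ :=
      LinearMap.IsIdempotentElem.mem_range_iff (p := f) hf |>.1 (hm₁f ⟨1, (one_smul _ _).symm⟩)
    obtain ⟨y, hy⟩ := hm₁a ⟨1, rfl⟩
    have ham₁ : m₁ <• a = m₁ := op_smul_eq_self_of_eq_op_smul ha hy
    exact minusLE_of_apply_eq_of_op_smul_eq hψ.symm ham₁ ha₁₂ hfm₁ hf₁₂
end
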